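/- arXiv:2604.04024 — 5 statements merged into one kernel-verified Lean document; each statement's English description precedes it below -/
import Mathlib

section
/- Let 𝓑 be a finite family of axis-parallel rectangles in ℝ² all containing the origin, with ⋂𝓑 = [a,b] × [c,d] where a ≤ 0 ≤ b and c ≤ 0 ≤ d. Let P ⊆ ℝ² be such that the intersection of any two rectangles of 𝓑 contains a point of P, and suppose no point of P lies in [a,b] × [c,d]. Suppose further 𝓑 contains, for the vertical direction, a rectangle of the form [a₀,b₀] × [c₀,d] (touching the top boundary of the common intersection) and analogously for the other three sides. Then one can choose at most four points s₁, s₂, s₃, s₄ of P (extremal points of P in the four axis-aligned slabs (−∞,a) × [c,d], (b,∞) × [c,d], [a,b] × (−∞,c), [a,b] × (d,∞)) such that every rectangle B ∈ 𝓑 avoiding all four chosen points contains points of P either in both the (closed) first and third quadrants, or in both the (closed) second and fourth quadrants. -/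
/-!
Let `R` be a rectangle of the family avoiding the chosen points. Since `R` contains the core
`[A,B] × [C,D]`, it contains every point of a slab lying between a point of `R` and the core;
so if `R` met a slab it would contain the extremal point of that slab. As `P` misses the core,
every point of `P ∩ R` therefore lies outside both bands `ℝ × [C,D]` and `[A,B] × ℝ`.
The rectangle touching the top of the core meets `R` in a point of `P`, which lies on or below
height `D`, hence below the band, hence in the closed lower half-plane; likewise for the other
three sides. A set meeting all four closed half-planes meets two opposite closed quadrants.
-/

open Set

def ContainsMaximizer {α β : Type*} [LinearOrder β] (S X : Set α) (f : α → β) : Prop :=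
  ∀ q ∈ X, ∃ s ∈ S ∩ X, f q ≤ f s

section ContainsMaximizer

variable {α β : Type*} [LinearOrder β] {S S' X R : Set α} {f : α → β}

theorem Set.Finite.exists_finset_card_le_one_containsMaximizer (hX : X.Finite) (f : α → β) :
    ∃ T : Finset α, ↑T ⊆ X ∧ T.card ≤ 1 ∧ ContainsMaximizer T X f := by
  rcases X.eq_empty_or_nonempty with rfl | hne
  · exact ⟨∅, by simp, by simp, by simp [ContainsMaximizer]⟩
  · obtain ⟨x, hx, hmax⟩ := exists_max_image X f hX hne
    exact ⟨{x}, by simpa using hx, by simp, fun q hq => ⟨x, ⟨by simp, hx⟩, hmax q hq⟩⟩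

theorem ContainsMaximizer.mono (h : ContainsMaximizer S X f) (hS : S ⊆ S') :
    ContainsMaximizer S' X f := fun q hq =>
  let ⟨s, ⟨hsS, hsX⟩, hle⟩ := h q hq
  ⟨s, ⟨hS hsS, hsX⟩, hle⟩

theorem ContainsMaximizer.notMem (h : ContainsMaximizer S X f) (hSR : ∀ s ∈ S, s ∉ R)
    (hR : ∀ q ∈ X, ∀ s ∈ X, q ∈ R → f q ≤ f s → s ∈ R) {q : α} (hq : q ∈ X) : q ∉ R :=
  fun hqR =>
    let ⟨s, ⟨hsS, hsX⟩, hle⟩ := h q hq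
    hSR s hsS (hR q hq s hsX hqR hle)

end ContainsMaximizer

/-- `S` contains a choice of each of the extremal points `s₁, s₂, s₃, s₄` that exists. -/
def SlabExtremal (S P : Set (ℝ × ℝ)) (A B C D : ℝ) : Prop :=
  ContainsMaximizer S {p ∈ P | p.1 < A ∧ p.2 ∈ Icc C D} (·.1) ∧
  ContainsMaximizer S {p ∈ P | B < p.1 ∧ p.2 ∈ Icc C D} (-·.1) ∧
  ContainsMaximizer S {p ∈ P | p.2 < C ∧ p.1 ∈ Icc A B} (·.2) ∧
  ContainsMaximizer S {p ∈ P | D < p.2 ∧ p.1 ∈ Icc A B} (-·.2)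

theorem exists_finset_slabExtremal {P : Set (ℝ × ℝ)} (hP : P.Finite) (A B C D : ℝ) :
    ∃ S : Finset (ℝ × ℝ), ↑S ⊆ P ∧ S.card ≤ 4 ∧ SlabExtremal S P A B C D := by
  obtain ⟨T₁, hT₁, hc₁, h₁⟩ :=
    (hP.sep fun p => p.1 < A ∧ p.2 ∈ Icc C D).exists_finset_card_le_one_containsMaximizer (·.1)
  obtain ⟨T₂, hT₂, hc₂, h₂⟩ :=
    (hP.sep fun p => B < p.1 ∧ p.2 ∈ Icc C D).exists_finset_card_le_one_containsMaximizer (-·.1)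
  obtain ⟨T₃, hT₃, hc₃, h₃⟩ :=
    (hP.sep fun p => p.2 < C ∧ p.1 ∈ Icc A B).exists_finset_card_le_one_containsMaximizer (·.2)
  obtain ⟨T₄, hT₄, hc₄, h₄⟩ :=
    (hP.sep fun p => D < p.2 ∧ p.1 ∈ Icc A B).exists_finset_card_le_one_containsMaximizer (-·.2)
  refine ⟨T₁ ∪ T₂ ∪ T₃ ∪ T₄, ?_, ?_, h₁.mono ?_, h₂.mono ?_, h₃.mono ?_, h₄.mono ?_⟩
  · simp only [Finset.coe_union, union_subset_iff]
    exact ⟨⟨⟨hT₁.trans (sep_subset _ _), hT₂.trans (sep_subset _ _)⟩,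
      hT₃.trans (sep_subset _ _)⟩, hT₄.trans (sep_subset _ _)⟩
  · have := Finset.card_union_le (T₁ ∪ T₂ ∪ T₃) T₄
    have := Finset.card_union_le (T₁ ∪ T₂) T₃
    have := Finset.card_union_le T₁ T₂
    omega
  all_goals intro x hx; simp [hx]

theorem SlabExtremal.notMem_bands {S P : Set (ℝ × ℝ)} {A B C D a b c d : ℝ}
    (hS : SlabExtremal S P A B C D) (hAB : A ≤ B) (hCD : C ≤ D)
    (hK : Icc A B ×ˢ Icc C D ⊆ Icc a b ×ˢ Icc c d) (hPK : ∀ p ∈ P, p ∉ Icc A B ×ˢ Icc C D)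
    (hSR : ∀ s ∈ S, s ∉ Icc a b ×ˢ Icc c d) {p : ℝ × ℝ} (hp : p ∈ P)
    (hpR : p ∈ Icc a b ×ˢ Icc c d) : p.1 ∉ Icc A B ∧ p.2 ∉ Icc C D := by
  rw [Icc_prod_Icc, Icc_prod_Icc, Icc_subset_Icc_iff (Prod.mk_le_mk.2 ⟨hAB, hCD⟩)] at hK
  obtain ⟨⟨ha, hc⟩, hb, hd⟩ := hK
  obtain ⟨hleft, hright, hlower, hupper⟩ := hS
  constructor
  · intro hx
    rcases lt_or_ge p.2 C with hy | hy
    · refine hlower.notMem hSR (fun q _ s hs hq hle => ?_) ⟨hp, hy, hx⟩ hpR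
      exact ⟨⟨ha.trans hs.2.2.1, hs.2.2.2.trans hb⟩, hq.2.1.trans hle,
        hs.2.1.le.trans (hCD.trans hd)⟩
    rcases le_or_gt p.2 D with hy' | hy'
    · exact hPK p hp ⟨hx, hy, hy'⟩
    · refine hupper.notMem hSR (fun q _ s hs hq hle => ?_) ⟨hp, hy', hx⟩ hpR
      exact ⟨⟨ha.trans hs.2.2.1, hs.2.2.2.trans hb⟩, (hc.trans hCD).trans hs.2.1.le,
        (neg_le_neg_iff.1 hle).trans hq.2.2⟩
  · intro hy
    rcases lt_or_ge p.1 A with hx | hx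
    · refine hleft.notMem hSR (fun q _ s hs hq hle => ?_) ⟨hp, hx, hy⟩ hpR
      exact ⟨⟨hq.1.1.trans hle, hs.2.1.le.trans (hAB.trans hb)⟩, hc.trans hs.2.2.1,
        hs.2.2.2.trans hd⟩
    rcases le_or_gt p.1 B with hx' | hx'
    · exact hPK p hp ⟨⟨hx, hx'⟩, hy⟩
    · refine hright.notMem hSR (fun q _ s hs hq hle => ?_) ⟨hp, hx', hy⟩ hpR
      exact ⟨⟨(ha.trans hAB).trans hs.2.1.le, (neg_le_neg_iff.1 hle).trans hq.1.2⟩,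
        hc.trans hs.2.2.1, hs.2.2.2.trans hd⟩

theorem exists_opposite_quadrants {Q : Set (ℝ × ℝ)} (hlower : ∃ p ∈ Q, p.2 ≤ 0)
    (hupper : ∃ p ∈ Q, 0 ≤ p.2) (hleft : ∃ p ∈ Q, p.1 ≤ 0) (hright : ∃ p ∈ Q, 0 ≤ p.1) :
    ((∃ p ∈ Q, 0 ≤ p.1 ∧ 0 ≤ p.2) ∧ (∃ p ∈ Q, p.1 ≤ 0 ∧ p.2 ≤ 0)) ∨
      ((∃ p ∈ Q, p.1 ≤ 0 ∧ 0 ≤ p.2) ∧ (∃ p ∈ Q, 0 ≤ p.1 ∧ p.2 ≤ 0)) := by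
  have h34 : (∃ p ∈ Q, p.1 ≤ 0 ∧ p.2 ≤ 0) ∨ (∃ p ∈ Q, 0 ≤ p.1 ∧ p.2 ≤ 0) :=
    let ⟨p, hp, hy⟩ := hlower
    (le_total p.1 0).imp (fun hx => ⟨p, hp, hx, hy⟩) (fun hx => ⟨p, hp, hx, hy⟩)
  have h21 : (∃ p ∈ Q, p.1 ≤ 0 ∧ 0 ≤ p.2) ∨ (∃ p ∈ Q, 0 ≤ p.1 ∧ 0 ≤ p.2) :=
    let ⟨p, hp, hy⟩ := hupper
    (le_total p.1 0).imp (fun hx => ⟨p, hp, hx, hy⟩) (fun hx => ⟨p, hp, hx, hy⟩)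
  have h32 : (∃ p ∈ Q, p.1 ≤ 0 ∧ p.2 ≤ 0) ∨ (∃ p ∈ Q, p.1 ≤ 0 ∧ 0 ≤ p.2) :=
    let ⟨p, hp, hx⟩ := hleft
    (le_total p.2 0).imp (fun hy => ⟨p, hp, hx, hy⟩) (fun hy => ⟨p, hp, hx, hy⟩)
  have h41 : (∃ p ∈ Q, 0 ≤ p.1 ∧ p.2 ≤ 0) ∨ (∃ p ∈ Q, 0 ≤ p.1 ∧ 0 ≤ p.2) :=
    let ⟨p, hp, hx⟩ := hright
    (le_total p.2 0).imp (fun hy => ⟨p, hp, hx, hy⟩) (fun hy => ⟨p, hp, hx, hy⟩)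
  rcases h34 with h3 | h4
  · rcases h41 with h4 | h1
    · exact h21.elim (fun h2 => Or.inr ⟨h2, h4⟩) (fun h1 => Or.inl ⟨h1, h3⟩)
    · exact Or.inl ⟨h1, h3⟩
  · rcases h21 with h2 | h1
    · exact Or.inr ⟨h2, h4⟩
    · exact h32.elim (fun h3 => Or.inl ⟨h1, h3⟩) (fun h2 => Or.inr ⟨h2, h4⟩)

section HalfLine

variable {α : Type*} {Q : Set α} {f : α → ℝ} {C D : ℝ}

theorem exists_nonpos_of_forall_notMem_Icc (hQ : ∀ q ∈ Q, f q ∉ Icc C D) (hC : C ≤ 0)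
    (h : ∃ q ∈ Q, f q ≤ D) : ∃ q ∈ Q, f q ≤ 0 :=
  let ⟨q, hq, hqD⟩ := h
  ⟨q, hq, (lt_of_not_ge fun hCq => hQ q hq ⟨hCq, hqD⟩).le.trans hC⟩

theorem exists_nonneg_of_forall_notMem_Icc (hQ : ∀ q ∈ Q, f q ∉ Icc C D) (hD : 0 ≤ D)
    (h : ∃ q ∈ Q, C ≤ f q) : ∃ q ∈ Q, 0 ≤ f q :=
  let ⟨q, hq, hCq⟩ := h
  ⟨q, hq, hD.trans (lt_of_not_ge fun hqD => hQ q hq ⟨hCq, hqD⟩).le⟩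

end HalfLine

/-- Choosing at most four extremal points of P in the four slabs around the common
intersection `[A,B] × [C,D]` of the family: every rectangle avoiding all four chosen
points contains points of P in both the first and third (closed) quadrants, or in both
the second and fourth (closed) quadrants. -/
theorem stmt8 {ι : Type*} (s : Finset ι) (a b c d : ι → ℝ) (A B C D : ℝ)
    (hA : A ≤ 0) (hB : 0 ≤ B) (hC : C ≤ 0) (hD : 0 ≤ D)
    (P : Set (ℝ × ℝ)) (hP : P.Finite)
    (hcap : (⋂ i ∈ s, Set.Icc (a i) (b i) ×ˢ Set.Icc (c i) (d i))
      = Set.Icc A B ×ˢ Set.Icc C D)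
    (htwo : ∀ i ∈ s, ∀ j ∈ s,
      ∃ p ∈ P, p ∈ Set.Icc (a i) (b i) ×ˢ Set.Icc (c i) (d i)
        ∧ p ∈ Set.Icc (a j) (b j) ×ˢ Set.Icc (c j) (d j))
    (hPout : P ∩ Set.Icc A B ×ˢ Set.Icc C D = ∅)
    (htop : ∃ i ∈ s, d i = D) (hbot : ∃ i ∈ s, c i = C)
    (hright : ∃ i ∈ s, b i = B) (hleft : ∃ i ∈ s, a i = A) :
    ∃ S : Finset (ℝ × ℝ), ↑S ⊆ P ∧ S.card ≤ 4 ∧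
      ∀ i ∈ s, (∀ x ∈ S, x ∉ Set.Icc (a i) (b i) ×ˢ Set.Icc (c i) (d i)) →
        ((∃ p ∈ P, p ∈ Set.Icc (a i) (b i) ×ˢ Set.Icc (c i) (d i) ∧ 0 ≤ p.1 ∧ 0 ≤ p.2) ∧
         (∃ p ∈ P, p ∈ Set.Icc (a i) (b i) ×ˢ Set.Icc (c i) (d i) ∧ p.1 ≤ 0 ∧ p.2 ≤ 0)) ∨
        ((∃ p ∈ P, p ∈ Set.Icc (a i) (b i) ×ˢ Set.Icc (c i) (d i) ∧ p.1 ≤ 0 ∧ 0 ≤ p.2) ∧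
         (∃ p ∈ P, p ∈ Set.Icc (a i) (b i) ×ˢ Set.Icc (c i) (d i) ∧ 0 ≤ p.1 ∧ p.2 ≤ 0)) := by
  obtain ⟨S, hSP, hcard, hS⟩ := exists_finset_slabExtremal hP A B C D
  refine ⟨S, hSP, hcard, fun i hi hSi => ?_⟩
  set Q := P ∩ Icc (a i) (b i) ×ˢ Icc (c i) (d i)
  have hK : Icc A B ×ˢ Icc C D ⊆ Icc (a i) (b i) ×ˢ Icc (c i) (d i) :=
    hcap ▸ biInter_subset_of_mem hi
  have hband (q : ℝ × ℝ) (hq : q ∈ Q) : q.1 ∉ Icc A B ∧ q.2 ∉ Icc C D :=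
    hS.notMem_bands (hA.trans hB) (hC.trans hD) hK
      (fun p hp hpK => hPout.subset ⟨hp, hpK⟩) hSi hq.1 hq.2
  have hmeet {j : ι} (hj : j ∈ s) : ∃ p ∈ Q, p ∈ Icc (a j) (b j) ×ˢ Icc (c j) (d j) :=
    let ⟨p, hp, hpi, hpj⟩ := htwo i hi j hj
    ⟨p, ⟨hp, hpi⟩, hpj⟩
  obtain ⟨j₁, hj₁, rfl⟩ := htop
  obtain ⟨j₂, hj₂, rfl⟩ := hbot
  obtain ⟨j₃, hj₃, rfl⟩ := hright
  obtain ⟨j₄, hj₄, rfl⟩ := hleft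
  have := exists_opposite_quadrants
    (exists_nonpos_of_forall_notMem_Icc (fun q hq => (hband q hq).2) hC
      (let ⟨p, hp, hpj⟩ := hmeet hj₁; ⟨p, hp, hpj.2.2⟩))
    (exists_nonneg_of_forall_notMem_Icc (fun q hq => (hband q hq).2) hD
      (let ⟨p, hp, hpj⟩ := hmeet hj₂; ⟨p, hp, hpj.2.1⟩))
    (exists_nonpos_of_forall_notMem_Icc (fun q hq => (hband q hq).1) hA
      (let ⟨p, hp, hpj⟩ := hmeet hj₃; ⟨p, hp, hpj.1.2⟩))
    (exists_nonneg_of_forall_notMem_Icc (fun q hq => (hband q hq).1) hB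
      (let ⟨p, hp, hpj⟩ := hmeet hj₄; ⟨p, hp, hpj.1.1⟩))
  simpa only [Q, mem_inter_iff, and_assoc] using this
end

section
/- Let P ⊆ ℝ² and let 𝓑 be a finite family of axis-parallel rectangles such that (i) every rectangle contains a point of P, (ii) any two rectangles of 𝓑 intersect, and (iii) among any p rectangles of 𝓑 there exist two whose intersection contains a point of P. Then there exists S ⊆ P with |S| ≤ 12(p−1) such that every B ∈ 𝓑 contains a point of S, assuming the Kaiser-type bound τ(𝓘) ≤ 12·ν(𝓘) for families of 4-intervals. -/
open Finset in
lemma quadAux (Q : Finset (ℝ × ℝ)) :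
    ∃ A ⊆ Q, (∀ q ∈ Q, ∃ m ∈ A, m.1 ≤ q.1 ∧ m.2 ≤ q.2) ∧
      ∀ m ∈ A, ∀ m' ∈ A, m.1 ≤ m'.1 → m'.2 ≤ m.2 := by
  classical
  refine ⟨Q.filter (fun m => ∀ r ∈ Q, r.1 ≤ m.1 → r.2 ≤ m.2 → r = m), filter_subset _ _, ?_, ?_⟩
  · intro q hq
    obtain ⟨m, hm, hmin⟩ := Finset.exists_min_image
      (Q.filter (fun r => r.1 ≤ q.1 ∧ r.2 ≤ q.2)) (fun r => r.1 + r.2)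
      ⟨q, by simp [hq]⟩
    rw [mem_filter] at hm
    refine ⟨m, ?_, hm.2⟩
    rw [mem_filter]
    refine ⟨hm.1, fun r hr h1 h2 => ?_⟩
    have hrD : r ∈ Q.filter (fun r => r.1 ≤ q.1 ∧ r.2 ≤ q.2) := by
      rw [mem_filter]; exact ⟨hr, le_trans h1 hm.2.1, le_trans h2 hm.2.2⟩
    have := hmin r hrD
    have e1 : r.1 = m.1 := by linarith
    have e2 : r.2 = m.2 := by linarith
    exact Prod.ext e1 e2
  · intro m hm m' hm' hle
    rw [mem_filter] at hm hm'
    by_cases h : m.2 ≤ m'.2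
    · have := hm'.2 m hm.1 hle h
      rw [this]
    · linarith

lemma quadSigned (e1 e2 : ℝ) (h1 : e1 = 1 ∨ e1 = -1) (h2 : e2 = 1 ∨ e2 = -1)
    (Q : Finset (ℝ × ℝ)) :
    ∃ A ⊆ Q, (∀ q ∈ Q, ∃ m ∈ A, e1 * m.1 ≤ e1 * q.1 ∧ e2 * m.2 ≤ e2 * q.2) ∧
      ∀ m ∈ A, ∀ m' ∈ A, e1 * m.1 ≤ e1 * m'.1 → e2 * m'.2 ≤ e2 * m.2 := by
  classical
  have he1 : e1 * e1 = 1 := by rcases h1 with rfl | rfl <;> norm_num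
  have he2 : e2 * e2 = 1 := by rcases h2 with rfl | rfl <;> norm_num
  have k1 : ∀ x : ℝ, e1 * (e1 * x) = x := fun x => by rw [← mul_assoc, he1, one_mul]
  have k2 : ∀ x : ℝ, e2 * (e2 * x) = x := fun x => by rw [← mul_assoc, he2, one_mul]
  set φ : ℝ × ℝ → ℝ × ℝ := fun q => (e1 * q.1, e2 * q.2) with hφ
  have hφ1 : ∀ q, (φ q).1 = e1 * q.1 := fun q => rfl
  have hφ2 : ∀ q, (φ q).2 = e2 * q.2 := fun q => rfl
  have hinv : ∀ q, φ (φ q) = q := by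
    intro q
    have : φ (φ q) = (e1 * (e1 * q.1), e2 * (e2 * q.2)) := rfl
    rw [this, k1, k2]
  obtain ⟨A', hA'sub, hA'dom, hA'anti⟩ := quadAux (Q.image φ)
  refine ⟨A'.image φ, ?_, ?_, ?_⟩
  · intro m hm
    obtain ⟨n, hn, rfl⟩ := Finset.mem_image.1 hm
    obtain ⟨q, hq, rfl⟩ := Finset.mem_image.1 (hA'sub hn)
    rw [hinv]; exact hq
  · intro q hq
    obtain ⟨n, hn, hd1, hd2⟩ := hA'dom (φ q) (Finset.mem_image_of_mem φ hq)
    rw [hφ1] at hd1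
    rw [hφ2] at hd2
    refine ⟨φ n, Finset.mem_image_of_mem φ hn, ?_, ?_⟩
    · rw [hφ1, k1]; exact hd1
    · rw [hφ2, k2]; exact hd2
  · intro m hm m' hm' hle
    obtain ⟨n, hn, rfl⟩ := Finset.mem_image.1 hm
    obtain ⟨n', hn', rfl⟩ := Finset.mem_image.1 hm'
    rw [hφ1, hφ1, k1, k1] at hle
    rw [hφ2, hφ2, k2, k2]
    exact hA'anti n hn n' hn' hle

lemma sandwichAux (e x q x0 lo hi : ℝ) (he : e = 1 ∨ e = -1)
    (hd : e * x ≤ e * q) (hq1 : lo ≤ q) (hq2 : q ≤ hi)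
    (hx : 0 ≤ e * (x - x0)) (h0a : lo ≤ x0) (h0b : x0 ≤ hi) :
    lo ≤ x ∧ x ≤ hi := by
  rcases he with rfl | rfl <;> constructor <;> nlinarith

lemma betwAux (e x x1 x2 lo hi : ℝ) (he : e = 1 ∨ e = -1)
    (ha : e * x1 ≤ e * x) (hb : e * x ≤ e * x2)
    (h1 : lo ≤ x1) (h2 : x1 ≤ hi) (h3 : lo ≤ x2) (h4 : x2 ≤ hi) :
    lo ≤ x ∧ x ≤ hi := by
  rcases he with rfl | rfl <;> constructor <;> nlinarith

noncomputable def ex4 : Fin 4 → ℝ := ![1, 1, -1, -1]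
noncomputable def ey4 : Fin 4 → ℝ := ![1, -1, 1, -1]

lemma ex4_pm : ∀ j, ex4 j = 1 ∨ ex4 j = -1 := by
  intro j; fin_cases j <;> simp [ex4]

lemma ey4_pm : ∀ j, ey4 j = 1 ∨ ey4 j = -1 := by
  intro j; fin_cases j <;> simp [ey4]

lemma quad_exists (x0 y0 : ℝ) (q : ℝ × ℝ) :
    ∃ j : Fin 4, 0 ≤ ex4 j * (q.1 - x0) ∧ 0 ≤ ey4 j * (q.2 - y0) := by
  rcases le_total x0 q.1 with hx | hx <;> rcases le_total y0 q.2 with hy | hy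
  · exact ⟨0, by simp [ex4, ey4]; constructor <;> linarith⟩
  · exact ⟨1, by simp [ex4, ey4]; constructor <;> linarith⟩
  · exact ⟨2, by simp [ex4, ey4]; constructor <;> linarith⟩
  · exact ⟨3, by simp [ex4, ey4]; constructor <;> linarith⟩

def inR (lo1 hi1 lo2 hi2 : ℝ) (q : ℝ × ℝ) : Prop :=
  lo1 ≤ q.1 ∧ q.1 ≤ hi1 ∧ lo2 ≤ q.2 ∧ q.2 ≤ hi2

lemma inR_iff (lo1 hi1 lo2 hi2 : ℝ) (q : ℝ × ℝ) :
    inR lo1 hi1 lo2 hi2 q ↔ q ∈ Set.Icc lo1 hi1 ×ˢ Set.Icc lo2 hi2 := by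
  simp only [inR, Set.mem_prod, Set.mem_Icc]; tauto

/-- Theorem: assuming the Kaiser-type bound τ ≤ 12·ν for families of 4-intervals,
a finite family of pairwise intersecting rectangles, each containing a point of P,
whose trace on P has the (p,2)-property, can be pierced by at most 12(p-1) points of P. -/
theorem stmt12 {ι : Type*} (p : ℕ) (hp : 2 ≤ p) (P : Set (ℝ × ℝ))
    (s : Finset ι) (a b c d : ι → ℝ)
    (hKaiser : ∀ (κ : Type) (t : Finset κ) (y : Fin 4 → ℝ), Function.Injective y →
      ∀ (u v : κ → Fin 4 → ℝ) (n : ℕ),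
      (∀ t' ⊆ t, (∀ i ∈ t', ∀ i' ∈ t', i ≠ i' →
          (⋃ j : Fin 4, Set.Icc (u i j) (v i j) ×ˢ ({y j} : Set ℝ)) ∩
          (⋃ j : Fin 4, Set.Icc (u i' j) (v i' j) ×ˢ ({y j} : Set ℝ)) = ∅) →
        t'.card ≤ n) →
      ∃ T : Finset (ℝ × ℝ), T.card ≤ 12 * n ∧
        ∀ i ∈ t, ∃ x ∈ T, x ∈ ⋃ j : Fin 4, Set.Icc (u i j) (v i j) ×ˢ ({y j} : Set ℝ))
    (hmem : ∀ i ∈ s, ∃ q ∈ P, q ∈ Set.Icc (a i) (b i) ×ˢ Set.Icc (c i) (d i))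
    (hint : ∀ i ∈ s, ∀ j ∈ s,
      (Set.Icc (a i) (b i) ×ˢ Set.Icc (c i) (d i) ∩
       Set.Icc (a j) (b j) ×ˢ Set.Icc (c j) (d j)).Nonempty)
    (hpq : ∀ t ⊆ s, t.card = p → ∃ i ∈ t, ∃ j ∈ t, i ≠ j ∧
      ∃ q ∈ P, q ∈ Set.Icc (a i) (b i) ×ˢ Set.Icc (c i) (d i)
        ∧ q ∈ Set.Icc (a j) (b j) ×ˢ Set.Icc (c j) (d j)) :
    ∃ S : Finset (ℝ × ℝ), ↑S ⊆ P ∧ S.card ≤ 12 * (p - 1) ∧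
      ∀ i ∈ s, ∃ x ∈ S, x ∈ Set.Icc (a i) (b i) ×ˢ Set.Icc (c i) (d i) := by
  classical
  rcases s.eq_empty_or_nonempty with rfl | hs
  · exact ⟨∅, by simp, by simp, by simp⟩
  obtain ⟨i0, hi0⟩ := hs
  obtain ⟨q0, hq0P, _⟩ := hmem i0 hi0
  -- common point (x0, y0) of all rectangles
  have hsne : s.Nonempty := ⟨i0, hi0⟩
  have hsa : (s.image a).Nonempty := hsne.image a
  have hsc : (s.image c).Nonempty := hsne.image c
  set x0 := (s.image a).max' hsa with hx0def
  set y0 := (s.image c).max' hsc with hy0def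
  have hx0 : ∀ i ∈ s, a i ≤ x0 ∧ x0 ≤ b i := by
    intro i hi
    refine ⟨Finset.le_max' _ _ (Finset.mem_image_of_mem a hi), ?_⟩
    obtain ⟨i', hi', he⟩ := Finset.mem_image.1 ((s.image a).max'_mem hsa)
    obtain ⟨q, hq⟩ := hint i' hi' i hi
    rw [Set.mem_inter_iff, ← inR_iff, ← inR_iff] at hq
    rw [← hx0def] at he
    rw [← he]
    exact le_trans hq.1.1 hq.2.2.1
  have hy0 : ∀ i ∈ s, c i ≤ y0 ∧ y0 ≤ d i := by
    intro i hi
    refine ⟨Finset.le_max' _ _ (Finset.mem_image_of_mem c hi), ?_⟩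
    obtain ⟨i', hi', he⟩ := Finset.mem_image.1 ((s.image c).max'_mem hsc)
    obtain ⟨q, hq⟩ := hint i' hi' i hi
    rw [Set.mem_inter_iff, ← inR_iff, ← inR_iff] at hq
    rw [← hy0def] at he
    rw [← he]
    exact le_trans hq.1.2.2.1 hq.2.2.2.2
  -- witness points for pairs
  have hwex : ∀ i i' : ι, ∃ m : ℝ × ℝ, m ∈ P ∧
      ((∃ q ∈ P, inR (a i) (b i) (c i) (d i) q ∧ inR (a i') (b i') (c i') (d i') q) →
        inR (a i) (b i) (c i) (d i) m ∧ inR (a i') (b i') (c i') (d i') m) := by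
    intro i i'
    by_cases h : ∃ q ∈ P, inR (a i) (b i) (c i) (d i) q ∧ inR (a i') (b i') (c i') (d i') q
    · obtain ⟨q, hqP, h1, h2⟩ := h
      exact ⟨q, hqP, fun _ => ⟨h1, h2⟩⟩
    · exact ⟨q0, hq0P, fun hh => absurd hh h⟩
  choose w hwP hwB using hwex
  set Q : Finset (ℝ × ℝ) := (s ×ˢ s).image (fun ij => w ij.1 ij.2) with hQdef
  have hQP : ∀ q ∈ Q, q ∈ P := by
    intro q hq
    rw [hQdef] at hq
    obtain ⟨ij, _, rfl⟩ := Finset.mem_image.1 hq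
    exact hwP _ _
  have hQmem : ∀ i ∈ s, ∀ i' ∈ s, w i i' ∈ Q := by
    intro i hi i' hi'
    rw [hQdef]
    exact Finset.mem_image.2 ⟨(i, i'), Finset.mem_product.2 ⟨hi, hi'⟩, rfl⟩
  -- antichains per quadrant
  have hAj : ∀ j : Fin 4, ∃ A ⊆ Q.filter
      (fun q => 0 ≤ ex4 j * (q.1 - x0) ∧ 0 ≤ ey4 j * (q.2 - y0)),
      (∀ q ∈ Q.filter (fun q => 0 ≤ ex4 j * (q.1 - x0) ∧ 0 ≤ ey4 j * (q.2 - y0)),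
        ∃ m ∈ A, ex4 j * m.1 ≤ ex4 j * q.1 ∧ ey4 j * m.2 ≤ ey4 j * q.2) ∧
      ∀ m ∈ A, ∀ m' ∈ A, ex4 j * m.1 ≤ ex4 j * m'.1 → ey4 j * m'.2 ≤ ey4 j * m.2 :=
    fun j => quadSigned (ex4 j) (ey4 j) (ex4_pm j) (ey4_pm j) _
  choose A hAsub hAdom hAanti using hAj
  have hAQ : ∀ j, ∀ m ∈ A j, m ∈ Q ∧ 0 ≤ ex4 j * (m.1 - x0) ∧ 0 ≤ ey4 j * (m.2 - y0) := by
    intro j m hm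
    have := hAsub j hm
    rw [Finset.mem_filter] at this
    exact this
  -- trace images and interval endpoints
  set X : ι → Fin 4 → Finset ℝ := fun i j =>
    ((A j).filter (fun m => inR (a i) (b i) (c i) (d i) m)).image (fun m => ex4 j * m.1)
    with hXdef
  have huvex : ∀ (i : ι) (j : Fin 4), ∃ uv : ℝ × ℝ,
      ((X i j).Nonempty → uv.1 ∈ X i j ∧ uv.2 ∈ X i j ∧
        ∀ r ∈ X i j, uv.1 ≤ r ∧ r ≤ uv.2) ∧
      (¬ (X i j).Nonempty → uv.2 < uv.1) := by
    intro i j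
    by_cases h : (X i j).Nonempty
    · exact ⟨((X i j).min' h, (X i j).max' h),
        fun _ => ⟨Finset.min'_mem _ h, Finset.max'_mem _ h,
          fun r hr => ⟨Finset.min'_le _ _ hr, Finset.le_max' _ _ hr⟩⟩,
        fun h' => absurd h h'⟩
    · exact ⟨(1, 0), fun h' => absurd h' h, fun _ => by norm_num⟩
  choose uv huvne huve using huvex
  -- least antichain point to the right of x, on line j
  have hψex : ∀ (j : Fin 4) (x : ℝ), ∃ m : ℝ × ℝ, m ∈ P ∧
      (((A j).filter (fun m' => x ≤ ex4 j * m'.1)).Nonempty →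
        m ∈ (A j).filter (fun m' => x ≤ ex4 j * m'.1) ∧
        ∀ m' ∈ (A j).filter (fun m' => x ≤ ex4 j * m'.1), ex4 j * m.1 ≤ ex4 j * m'.1) := by
    intro j x
    by_cases h : ((A j).filter (fun m' => x ≤ ex4 j * m'.1)).Nonempty
    · obtain ⟨m, hm, hmin⟩ := Finset.exists_min_image _ (fun m' => ex4 j * m'.1) h
      have hmA : m ∈ A j := (Finset.mem_filter.1 hm).1
      exact ⟨m, hQP _ (hAQ j m hmA).1, fun _ => ⟨hm, hmin⟩⟩
    · exact ⟨q0, hq0P, fun h' => absurd h' h⟩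
  choose ψ hψP hψmin using hψex
  -- key recovery lemma
  have hkey : ∀ i ∈ s, ∀ (j : Fin 4) (x : ℝ), (uv i j).1 ≤ x → x ≤ (uv i j).2 →
      inR (a i) (b i) (c i) (d i) (ψ j x) := by
    intro i hi j x h1 h2
    have hXne : (X i j).Nonempty := by
      by_contra h
      have := huve i j h
      linarith
    obtain ⟨hu, hv, _⟩ := huvne i j hXne
    rw [hXdef] at hu hv
    obtain ⟨m1, hm1mem, hm1e⟩ := Finset.mem_image.1 hu
    obtain ⟨m2, hm2mem, hm2e⟩ := Finset.mem_image.1 hv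
    rw [Finset.mem_filter] at hm1mem hm2mem
    have hFne : ((A j).filter (fun m' => x ≤ ex4 j * m'.1)).Nonempty :=
      ⟨m2, Finset.mem_filter.2 ⟨hm2mem.1, by rw [hm2e]; exact h2⟩⟩
    obtain ⟨hψF, hψm⟩ := hψmin j x hFne
    have hψA : ψ j x ∈ A j := (Finset.mem_filter.1 hψF).1
    have hψx : x ≤ ex4 j * (ψ j x).1 := (Finset.mem_filter.1 hψF).2
    have hle2 : ex4 j * (ψ j x).1 ≤ ex4 j * m2.1 := by
      have := hψm m2 (Finset.mem_filter.2 ⟨hm2mem.1, by rw [hm2e]; exact h2⟩)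
      exact this
    have hle1 : ex4 j * m1.1 ≤ ex4 j * (ψ j x).1 := by
      calc ex4 j * m1.1 = (uv i j).1 := hm1e
        _ ≤ x := h1
        _ ≤ ex4 j * (ψ j x).1 := hψx
    obtain ⟨hr1, hr2, hr3, hr4⟩ := hm1mem.2
    obtain ⟨hs1, hs2, hs3, hs4⟩ := hm2mem.2
    have hx12 := betwAux (ex4 j) (ψ j x).1 m1.1 m2.1 (a i) (b i) (ex4_pm j)
      hle1 hle2 hr1 hr2 hs1 hs2
    have hanti1 : ey4 j * (ψ j x).2 ≤ ey4 j * m1.2 := hAanti j m1 hm1mem.1 (ψ j x) hψA hle1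
    have hanti2 : ey4 j * m2.2 ≤ ey4 j * (ψ j x).2 := hAanti j (ψ j x) hψA m2 hm2mem.1 hle2
    have hy12 := betwAux (ey4 j) (ψ j x).2 m2.2 m1.2 (c i) (d i) (ey4_pm j)
      hanti2 hanti1 hs3 hs4 hr3 hr4
    exact ⟨hx12.1, hx12.2, hy12.1, hy12.2⟩
  -- shared P-point gives shared interval point
  have hshare : ∀ i ∈ s, ∀ i' ∈ s,
      (∃ q ∈ P, inR (a i) (b i) (c i) (d i) q ∧ inR (a i') (b i') (c i') (d i') q) →
      ∃ j : Fin 4, ∃ r : ℝ, ((uv i j).1 ≤ r ∧ r ≤ (uv i j).2) ∧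
        ((uv i' j).1 ≤ r ∧ r ≤ (uv i' j).2) := by
    intro i hi i' hi' hex
    obtain ⟨hB1, hB2⟩ := hwB i i' hex
    have hqQ : w i i' ∈ Q := hQmem i hi i' hi'
    obtain ⟨j, hj1, hj2⟩ := quad_exists x0 y0 (w i i')
    obtain ⟨m, hmA, hd1, hd2⟩ := hAdom j (w i i') (Finset.mem_filter.2 ⟨hqQ, hj1, hj2⟩)
    have hmq := hAQ j m hmA
    have hmi : inR (a i) (b i) (c i) (d i) m := by
      obtain ⟨p1, p2, p3, p4⟩ := hB1
      have hx := sandwichAux (ex4 j) m.1 (w i i').1 x0 (a i) (b i) (ex4_pm j)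
        hd1 p1 p2 hmq.2.1 (hx0 i hi).1 (hx0 i hi).2
      have hy := sandwichAux (ey4 j) m.2 (w i i').2 y0 (c i) (d i) (ey4_pm j)
        hd2 p3 p4 hmq.2.2 (hy0 i hi).1 (hy0 i hi).2
      exact ⟨hx.1, hx.2, hy.1, hy.2⟩
    have hmi' : inR (a i') (b i') (c i') (d i') m := by
      obtain ⟨p1, p2, p3, p4⟩ := hB2
      have hx := sandwichAux (ex4 j) m.1 (w i i').1 x0 (a i') (b i') (ex4_pm j)
        hd1 p1 p2 hmq.2.1 (hx0 i' hi').1 (hx0 i' hi').2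
      have hy := sandwichAux (ey4 j) m.2 (w i i').2 y0 (c i') (d i') (ey4_pm j)
        hd2 p3 p4 hmq.2.2 (hy0 i' hi').1 (hy0 i' hi').2
      exact ⟨hx.1, hx.2, hy.1, hy.2⟩
    have hmX : ex4 j * m.1 ∈ X i j := by
      rw [hXdef]
      exact Finset.mem_image_of_mem _ (Finset.mem_filter.2 ⟨hmA, hmi⟩)
    have hmX' : ex4 j * m.1 ∈ X i' j := by
      rw [hXdef]
      exact Finset.mem_image_of_mem _ (Finset.mem_filter.2 ⟨hmA, hmi'⟩)
    have b1 := (huvne i j ⟨_, hmX⟩).2.2 _ hmX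
    have b2 := (huvne i' j ⟨_, hmX'⟩).2.2 _ hmX'
    exact ⟨j, ex4 j * m.1, b1, b2⟩
  -- set up Kaiser instantiation
  set iOf : Fin s.card → ι := fun k => (s.equivFin.symm k : ι) with hiOfdef
  have hiOfs : ∀ k, iOf k ∈ s := fun k => (s.equivFin.symm k).2
  have hiOfinj : Function.Injective iOf := by
    intro k k' h
    exact s.equivFin.symm.injective (Subtype.ext h)
  set y : Fin 4 → ℝ := fun j => ((j : ℕ) : ℝ) with hydef
  have hyinj : Function.Injective y := by
    intro j j' h
    rw [hydef] at h
    exact Fin.val_injective (Nat.cast_injective h)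
  set u' : Fin s.card → Fin 4 → ℝ := fun k j => (uv (iOf k) j).1 with hu'def
  set v' : Fin s.card → Fin 4 → ℝ := fun k j => (uv (iOf k) j).2 with hv'def
  have hν : ∀ t' ⊆ (Finset.univ : Finset (Fin s.card)),
      (∀ k ∈ t', ∀ k' ∈ t', k ≠ k' →
        (⋃ j : Fin 4, Set.Icc (u' k j) (v' k j) ×ˢ ({y j} : Set ℝ)) ∩
        (⋃ j : Fin 4, Set.Icc (u' k' j) (v' k' j) ×ˢ ({y j} : Set ℝ)) = ∅) →
      t'.card ≤ p - 1 := by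
    intro t' _ hdisj
    by_contra hcard
    push_neg at hcard
    have hple : p ≤ t'.card := by omega
    obtain ⟨t'', ht''sub, ht''card⟩ := Finset.exists_subset_card_eq hple
    have himg : t''.image iOf ⊆ s := by
      intro i hi
      obtain ⟨k, _, rfl⟩ := Finset.mem_image.1 hi
      exact hiOfs k
    have hcardimg : (t''.image iOf).card = p := by
      rw [Finset.card_image_of_injective _ hiOfinj, ht''card]
    obtain ⟨i1, hi1, i2, hi2, hne, q, hqP, hq1, hq2⟩ := hpq _ himg hcardimg
    obtain ⟨k1, hk1, rfl⟩ := Finset.mem_image.1 hi1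
    obtain ⟨k2, hk2, rfl⟩ := Finset.mem_image.1 hi2
    have hkne : k1 ≠ k2 := fun h => hne (by rw [h])
    have hdis := hdisj k1 (ht''sub hk1) k2 (ht''sub hk2) hkne
    obtain ⟨j, r, hr1, hr2⟩ := hshare (iOf k1) (hiOfs k1) (iOf k2) (hiOfs k2)
      ⟨q, hqP, (inR_iff _ _ _ _ q).2 hq1, (inR_iff _ _ _ _ q).2 hq2⟩
    have hzmem : (r, y j) ∈
        (⋃ j : Fin 4, Set.Icc (u' k1 j) (v' k1 j) ×ˢ ({y j} : Set ℝ)) ∩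
        (⋃ j : Fin 4, Set.Icc (u' k2 j) (v' k2 j) ×ˢ ({y j} : Set ℝ)) := by
      constructor
      · exact Set.mem_iUnion.2 ⟨j, Set.mem_prod.2 ⟨Set.mem_Icc.2 hr1, rfl⟩⟩
      · exact Set.mem_iUnion.2 ⟨j, Set.mem_prod.2 ⟨Set.mem_Icc.2 hr2, rfl⟩⟩
    rw [hdis] at hzmem
    exact hzmem
  obtain ⟨T, hTcard, hTpierce⟩ := hKaiser (Fin s.card) Finset.univ y hyinj u' v' (p - 1) hν
  -- recovery map
  have hρex : ∀ z : ℝ × ℝ, ∃ m : ℝ × ℝ, m ∈ P ∧ ∀ j : Fin 4, z.2 = y j → m = ψ j z.1 := by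
    intro z
    by_cases h : ∃ j : Fin 4, z.2 = y j
    · obtain ⟨j, hj⟩ := h
      refine ⟨ψ j z.1, hψP j z.1, fun j' hj' => ?_⟩
      have : j' = j := hyinj (by rw [← hj', ← hj])
      rw [this]
    · exact ⟨q0, hq0P, fun j hj => absurd ⟨j, hj⟩ h⟩
  choose ρ hρP hρj using hρex
  refine ⟨T.image ρ, ?_, ?_, ?_⟩
  · intro z hz
    rw [Finset.mem_coe] at hz
    obtain ⟨t, _, rfl⟩ := Finset.mem_image.1 hz
    exact hρP t
  · exact le_trans (Finset.card_image_le) hTcard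
  · intro i hi
    obtain ⟨z, hzT, hzmem⟩ := hTpierce (s.equivFin ⟨i, hi⟩) (Finset.mem_univ _)
    have hik : iOf (s.equivFin ⟨i, hi⟩) = i := by
      rw [hiOfdef]
      simp
    rw [Set.mem_iUnion] at hzmem
    obtain ⟨j, hzj⟩ := hzmem
    rw [Set.mem_prod] at hzj
    have hz2 : z.2 = y j := hzj.2
    have hz1 := Set.mem_Icc.1 hzj.1
    rw [hu'def, hv'def] at hz1
    simp only [hik] at hz1
    have hrect := hkey i hi j z.1 hz1.1 hz1.2
    refine ⟨ρ z, Finset.mem_image_of_mem ρ hzT, ?_⟩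
    rw [hρj z j hz2]
    exact (inR_iff _ _ _ _ _).1 hrect
end

section
/- Let P ⊆ ℝ² and let 𝓑 be a finite family of axis-parallel rectangles in ℝ² such that every rectangle contains a point of P and among every p rectangles there exist two whose intersection contains a point of P. Assume (a) the Tomon-type bound τ(𝓕) ≤ C·ν(𝓕)·(log log ν(𝓕))² for finite families 𝓕 of axis-parallel rectangles in the plane, and (b) the bound τ(𝓖|_P) ≤ 12(p−1) for any subfamily 𝓖 ⊆ 𝓑 that is pairwise intersecting. Then τ(𝓑|_P) = O((p · log log p)²): there exists S ⊆ P of size O(p²(log log p)²) piercing every member of 𝓑. -/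
/-- Theorem (N(p,2,2) = O((p log log p)²)): assume (a) the Tomon-type bound
τ(𝓕) ≤ C·ν(𝓕)·(log log ν(𝓕))² for finite families of axis-parallel rectangles in the
plane, and (b) that the trace on P of every pairwise intersecting subfamily of 𝓑 can be
pierced by 12(p-1) points of P. If every rectangle of 𝓑 contains a point of P and the
trace 𝓑|_P has the (p,2)-property, then 𝓑|_P can be pierced by
12·C·(p-1)²·(log log (p-1))² points of P, which is O((p log log p)²). -/
theorem stmt13 {ι : Type*} (p : ℕ) (hp : 2 ≤ p) (C : ℝ) (hC : 0 < C)
    (P : Set (ℝ × ℝ)) (s : Finset ι) (a b c d : ι → ℝ)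
    (hTomon : ∀ (κ : Type) (t : Finset κ) (a' b' c' d' : κ → ℝ) (n : ℕ),
      (∀ t' ⊆ t, (∀ i ∈ t', ∀ i' ∈ t', i ≠ i' →
          Set.Icc (a' i) (b' i) ×ˢ Set.Icc (c' i) (d' i) ∩
          Set.Icc (a' i') (b' i') ×ˢ Set.Icc (c' i') (d' i') = ∅) →
        t'.card ≤ n) →
      ∃ T : Finset (ℝ × ℝ),
        (T.card : ℝ) ≤ C * n * (max 1 (Real.logb 2 (Real.logb 2 n))) ^ 2 ∧
        ∀ i ∈ t, ∃ x ∈ T, x ∈ Set.Icc (a' i) (b' i) ×ˢ Set.Icc (c' i) (d' i))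
    (hsub : ∀ t ⊆ s, (∀ i ∈ t, ∀ j ∈ t,
        (Set.Icc (a i) (b i) ×ˢ Set.Icc (c i) (d i) ∩
         Set.Icc (a j) (b j) ×ˢ Set.Icc (c j) (d j)).Nonempty) →
      ∃ S : Finset (ℝ × ℝ), ↑S ⊆ P ∧ S.card ≤ 12 * (p - 1) ∧
        ∀ i ∈ t, ∃ x ∈ S, x ∈ Set.Icc (a i) (b i) ×ˢ Set.Icc (c i) (d i))
    (hmem : ∀ i ∈ s, ∃ q ∈ P, q ∈ Set.Icc (a i) (b i) ×ˢ Set.Icc (c i) (d i))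
    (hpq : ∀ t ⊆ s, t.card = p → ∃ i ∈ t, ∃ j ∈ t, i ≠ j ∧
      ∃ q ∈ P, q ∈ Set.Icc (a i) (b i) ×ˢ Set.Icc (c i) (d i)
        ∧ q ∈ Set.Icc (a j) (b j) ×ˢ Set.Icc (c j) (d j)) :
    ∃ S : Finset (ℝ × ℝ), ↑S ⊆ P ∧
      (S.card : ℝ) ≤ 12 * C * ((p : ℝ) - 1) ^ 2 *
        (max 1 (Real.logb 2 (Real.logb 2 ((p : ℝ) - 1)))) ^ 2 ∧
      ∀ i ∈ s, ∃ x ∈ S, x ∈ Set.Icc (a i) (b i) ×ˢ Set.Icc (c i) (d i) := by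
  classical
  -- reindex s over Fin s.card
  let e : s ≃ Fin s.card := s.equivFin
  have key : ∀ t' ⊆ (Finset.univ : Finset (Fin s.card)),
      (∀ i ∈ t', ∀ i' ∈ t', i ≠ i' →
        Set.Icc (a (e.symm i)) (b (e.symm i)) ×ˢ Set.Icc (c (e.symm i)) (d (e.symm i)) ∩
        Set.Icc (a (e.symm i')) (b (e.symm i')) ×ˢ Set.Icc (c (e.symm i')) (d (e.symm i')) = ∅) →
      t'.card ≤ p - 1 := by
    intro t' _ hdisj
    by_contra h
    push_neg at h
    have hcard : p ≤ t'.card := by omega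
    obtain ⟨u, hu, hucard⟩ := Finset.exists_subset_card_eq hcard
    set f : Fin s.card → ι := fun i => (e.symm i : ι) with hf
    have hinj : Set.InjOn f u := by
      intro i _ j _ hij
      have : (e.symm i : s) = e.symm j := Subtype.ext hij
      exact e.symm.injective this
    have hcard' : (u.image f).card = p := by
      rw [Finset.card_image_of_injOn hinj, hucard]
    have hsub' : u.image f ⊆ s := by
      intro x hx
      obtain ⟨i, _, rfl⟩ := Finset.mem_image.mp hx
      exact (e.symm i).2
    obtain ⟨i, hi, j, hj, hij, q, _, hqi, hqj⟩ := hpq (u.image f) hsub' hcard'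
    obtain ⟨i0, hi0, rfl⟩ := Finset.mem_image.mp hi
    obtain ⟨j0, hj0, rfl⟩ := Finset.mem_image.mp hj
    have hne : i0 ≠ j0 := fun h => hij (by rw [h])
    have := hdisj i0 (hu hi0) j0 (hu hj0) hne
    exact absurd (Set.mem_inter hqi hqj) (by rw [this]; exact Set.notMem_empty q)
  obtain ⟨T, hTcard, hTpierce⟩ := hTomon (Fin s.card) Finset.univ
    (fun i => a (e.symm i)) (fun i => b (e.symm i)) (fun i => c (e.symm i))
    (fun i => d (e.symm i)) (p - 1) key
  have hp1 : ((p - 1 : ℕ) : ℝ) = (p : ℝ) - 1 := by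
    push_cast [Nat.cast_sub (by omega : 1 ≤ p)]; ring
  rw [hp1] at hTcard
  -- choice of piercing point for each rectangle in s
  have hpick : ∀ i ∈ s, ∃ x ∈ T, x ∈ Set.Icc (a i) (b i) ×ˢ Set.Icc (c i) (d i) := by
    intro i hi
    obtain ⟨x, hx, hxin⟩ := hTpierce (e ⟨i, hi⟩) (Finset.mem_univ _)
    refine ⟨x, hx, ?_⟩
    simpa using hxin
  choose! g hgT hgin using hpick
  -- groups
  have hgrp : ∀ x : ℝ × ℝ, ∃ S : Finset (ℝ × ℝ), ↑S ⊆ P ∧ S.card ≤ 12 * (p - 1) ∧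
      ∀ i ∈ s.filter (fun i => g i = x), ∃ y ∈ S,
        y ∈ Set.Icc (a i) (b i) ×ˢ Set.Icc (c i) (d i) := by
    intro x
    refine hsub _ (Finset.filter_subset _ _) ?_
    intro i hi j hj
    obtain ⟨hi', hgi⟩ := Finset.mem_filter.mp hi
    obtain ⟨hj', hgj⟩ := Finset.mem_filter.mp hj
    exact ⟨x, Set.mem_inter (hgi ▸ hgin i hi') (hgj ▸ hgin j hj')⟩
  choose Sx hSxP hSxcard hSxpierce using hgrp
  refine ⟨T.biUnion Sx, ?_, ?_, ?_⟩
  · intro y hy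
    obtain ⟨x, _, hyx⟩ := Finset.mem_biUnion.mp (by exact_mod_cast hy)
    exact hSxP x hyx
  · have h1 : (T.biUnion Sx).card ≤ T.card * (12 * (p - 1)) := by
      calc (T.biUnion Sx).card ≤ ∑ x ∈ T, (Sx x).card := Finset.card_biUnion_le
        _ ≤ ∑ _x ∈ T, (12 * (p - 1)) := Finset.sum_le_sum (fun x _ => hSxcard x)
        _ = T.card * (12 * (p - 1)) := by rw [Finset.sum_const, smul_eq_mul]
    have h2 : ((T.biUnion Sx).card : ℝ) ≤ (T.card : ℝ) * (12 * ((p : ℝ) - 1)) := by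
      calc ((T.biUnion Sx).card : ℝ) ≤ ((T.card * (12 * (p - 1)) : ℕ) : ℝ) := by
            exact_mod_cast h1
        _ = (T.card : ℝ) * (12 * ((p : ℝ) - 1)) := by push_cast [hp1]; ring
    have hM : (0 : ℝ) ≤ 12 * ((p : ℝ) - 1) := by
      have : (1 : ℝ) ≤ (p : ℝ) := by exact_mod_cast (by omega : 1 ≤ p)
      nlinarith
    calc ((T.biUnion Sx).card : ℝ) ≤ (T.card : ℝ) * (12 * ((p : ℝ) - 1)) := h2
      _ ≤ (C * ((p : ℝ) - 1) * (max 1 (Real.logb 2 (Real.logb 2 ((p : ℝ) - 1)))) ^ 2)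
            * (12 * ((p : ℝ) - 1)) := by
          apply mul_le_mul_of_nonneg_right hTcard hM
      _ = 12 * C * ((p : ℝ) - 1) ^ 2 *
            (max 1 (Real.logb 2 (Real.logb 2 ((p : ℝ) - 1)))) ^ 2 := by ring
  · intro i hi
    obtain ⟨y, hy, hyin⟩ := hSxpierce (g i) i (Finset.mem_filter.mpr ⟨hi, rfl⟩)
    exact ⟨y, Finset.mem_biUnion.mpr ⟨g i, hgT i hi, hy⟩, hyin⟩
end

section
/- (Komiya's polytopal KKMS theorem, special case Q = Δ₁ × Δ₁, a square) Let Q be the square [0,1]² (product of two 1-simplices). Assign to each face F of Q a point q(F) ∈ F and an open set B_F ⊆ Q such that every face F' satisfies F' ⊆ ⋃_{F ⊆ F'} B_F. Then there exists a collection 𝓕 of faces of Q with q(Q) ∈ conv{q(F) : F ∈ 𝓕} and ⋂_{F ∈ 𝓕} B_F ≠ ∅. -/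
open Set in
/-- A side of the unit interval face structure: `none` is all of [0,1],
`some false` is {0}, `some true` is {1}. -/
def komiyaSide : Option Bool → Set ℝ
  | none => Set.Icc 0 1
  | some false => {0}
  | some true => {1}

/-- A face of the square Q = [0,1]², indexed by a pair of sides. -/
def komiyaFace (m : Option Bool × Option Bool) : Set (ℝ × ℝ) :=
  komiyaSide m.1 ×ˢ komiyaSide m.2

/-!
Choose a partition of unity `ρ` subordinate to the open cover of `Q` by the sets
`B_F ∩ star F`, where `star F` is the set of points all of whose faces contain `F`, and put
`f x = ∑ ρ_F(x) q(F)`. Since `ρ_F(x) ≠ 0` forces `F` into every face containing `x`, the map `f`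
sends each face of `Q` into itself; by the Poincaré–Miranda theorem (a consequence of Sperner's
lemma on a square grid) it is then onto `Q`. For `x` with `f x = q(Q)`, the faces with
`ρ_F(x) ≠ 0` form the required collection.
-/

open Set

def spernerDoor (a b : Fin 3) : ZMod 2 :=
  if (a = 0 ∧ b = 1) ∨ (a = 1 ∧ b = 0) then 1 else 0

lemma spernerDoor_eq_zero_of_ne_zero {a b : Fin 3} (ha : a ≠ 0) (hb : b ≠ 0) :
    spernerDoor a b = 0 := by
  revert a b; decide

lemma spernerDoor_eq_zero_of_ne_one {a b : Fin 3} (ha : a ≠ 1) (hb : b ≠ 1) :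
    spernerDoor a b = 0 := by
  revert a b; decide

lemma spernerDoor_eq_add_of_ne_two {a b : Fin 3} (ha : a ≠ 2) (hb : b ≠ 2) :
    spernerDoor a b = (if a = 1 then 1 else 0) + (if b = 1 then 1 else 0) := by
  revert a b; decide

/-- A cycle through labels `0` and `1` only changes label an even number of times. -/
lemma forall_eq_of_spernerDoor_cycle_eq_one {a b c d : Fin 3}
    (h : spernerDoor a b + spernerDoor c d + spernerDoor a c + spernerDoor b d = 1) (l : Fin 3) :
    l = a ∨ l = b ∨ l = c ∨ l = d := by
  revert a b c d l; decide

lemma CharTwo.sum_range_add_succ {R : Type*} [Ring R] [CharP R 2] (g : ℕ → R) (n : ℕ) :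
    ∑ j ∈ Finset.range n, (g j + g (j + 1)) = g 0 + g n := by
  simpa [CharTwo.sub_eq_add, add_comm] using Finset.sum_range_sub g n

theorem exists_fully_labelled_cell (n : ℕ) (c : ℕ → ℕ → Fin 3)
    (hleft : ∀ j ≤ n, c 0 j = 0) (hright : ∀ j ≤ n, c n j ≠ 0)
    (hbot : ∀ i ≤ n, c i 0 ≠ 2) (htop : ∀ i ≤ n, c i n ≠ 1) :
    ∃ i < n, ∃ j < n, ∀ l, ∃ a ≤ 1, ∃ b ≤ 1, c (i + a) (j + b) = l := by
  set H : ℕ → ℕ → ZMod 2 := fun i j => spernerDoor (c i j) (c (i + 1) j)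
  set V : ℕ → ℕ → ZMod 2 := fun i j => spernerDoor (c i j) (c i (j + 1))
  have hbottom : ∑ i ∈ Finset.range n, H i 0 = 1 := by
    have hcn : c n 0 = 1 := by
      have := hright 0 (Nat.zero_le _); have := hbot n le_rfl; omega
    rw [Finset.sum_congr rfl fun i hi => spernerDoor_eq_add_of_ne_two
      (hbot i (Finset.mem_range.1 hi).le) (hbot (i + 1) (Finset.mem_range.1 hi)),
      CharTwo.sum_range_add_succ (fun i => if c i 0 = 1 then (1 : ZMod 2) else 0),
      hleft 0 (Nat.zero_le _), hcn]
    decide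
  have htop' : ∀ i ∈ Finset.range n, H i n = 0 := fun i hi =>
    spernerDoor_eq_zero_of_ne_one (htop i (Finset.mem_range.1 hi).le)
      (htop (i + 1) (Finset.mem_range.1 hi))
  have hleft' : ∀ j ∈ Finset.range n, V 0 j = 0 := fun j hj => by
    simp only [V, hleft j (Finset.mem_range.1 hj).le, hleft (j + 1) (Finset.mem_range.1 hj)]
    decide
  have hright' : ∀ j ∈ Finset.range n, V n j = 0 := fun j hj =>
    spernerDoor_eq_zero_of_ne_zero (hright j (Finset.mem_range.1 hj).le)
      (hright (j + 1) (Finset.mem_range.1 hj))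
  -- Interior edges are shared by two cells, so they cancel modulo 2.
  have hsum : ∑ i ∈ Finset.range n, ∑ j ∈ Finset.range n,
      (H i j + H i (j + 1) + V i j + V (i + 1) j) = 1 := by
    calc _ = ∑ i ∈ Finset.range n, ∑ j ∈ Finset.range n, (H i j + H i (j + 1))
          + ∑ j ∈ Finset.range n, ∑ i ∈ Finset.range n, (V i j + V (i + 1) j) := by
          rw [Finset.sum_comm (f := fun j i => V i j + V (i + 1) j), ← Finset.sum_add_distrib]
          simp only [← Finset.sum_add_distrib, add_assoc]
      _ = ∑ i ∈ Finset.range n, (H i 0 + H i n) + ∑ j ∈ Finset.range n, (V 0 j + V n j) := by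
          simp only [CharTwo.sum_range_add_succ]
      _ = 1 := by
          rw [Finset.sum_add_distrib, Finset.sum_add_distrib, hbottom, Finset.sum_eq_zero htop',
            Finset.sum_eq_zero hleft', Finset.sum_eq_zero hright']
          simp
  obtain ⟨i, hi, hij⟩ := Finset.exists_ne_zero_of_sum_ne_zero (hsum ▸ one_ne_zero)
  obtain ⟨j, hj, hcell⟩ := Finset.exists_ne_zero_of_sum_ne_zero hij
  refine ⟨i, Finset.mem_range.1 hi, j, Finset.mem_range.1 hj, fun l => ?_⟩
  have hZMod2 : ∀ x : ZMod 2, x ≠ 0 → x = 1 := by decide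
  rcases forall_eq_of_spernerDoor_cycle_eq_one (hZMod2 _ hcell) l with h | h | h | h
  exacts [⟨0, zero_le_one, 0, zero_le_one, h.symm⟩, ⟨1, le_rfl, 0, zero_le_one, h.symm⟩,
    ⟨0, zero_le_one, 1, le_rfl, h.symm⟩, ⟨1, le_rfl, 1, le_rfl, h.symm⟩]

abbrev unitSquare : Set (ℝ × ℝ) := Icc 0 1 ×ˢ Icc 0 1

lemma isCompact_unitSquare : IsCompact unitSquare := isCompact_Icc.prod isCompact_Icc

noncomputable def mirandaLabel (v : ℝ × ℝ) : Fin 3 :=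
  if v.1 < 0 then 0 else if v.2 < 0 then 1 else 2

lemma mirandaLabel_eq_zero_iff {v : ℝ × ℝ} : mirandaLabel v = 0 ↔ v.1 < 0 := by
  unfold mirandaLabel; split_ifs <;> simp_all

lemma mirandaLabel_eq_one_iff {v : ℝ × ℝ} : mirandaLabel v = 1 ↔ 0 ≤ v.1 ∧ v.2 < 0 := by
  unfold mirandaLabel; split_ifs <;> simp_all

lemma mirandaLabel_eq_two_iff {v : ℝ × ℝ} : mirandaLabel v = 2 ↔ 0 ≤ v.1 ∧ 0 ≤ v.2 := by
  unfold mirandaLabel; split_ifs <;> simp_all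

noncomputable def squareGrid (n i j : ℕ) : ℝ × ℝ := ((i : ℝ) / n, (j : ℝ) / n)

lemma squareGrid_mem_unitSquare {n i j : ℕ} (hi : i ≤ n) (hj : j ≤ n) :
    squareGrid n i j ∈ unitSquare := by
  have h : ∀ k ≤ n, (k : ℝ) / n ∈ Icc (0 : ℝ) 1 := fun k hk =>
    ⟨by positivity, div_le_one_of_le₀ (by exact_mod_cast hk) n.cast_nonneg⟩
  exact ⟨h i hi, h j hj⟩

lemma dist_squareGrid_le {n i j a b a' b' : ℕ} (ha : a ≤ 1) (hb : b ≤ 1) (ha' : a' ≤ 1)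
    (hb' : b' ≤ 1) :
    dist (squareGrid n (i + a) (j + b)) (squareGrid n (i + a') (j + b')) ≤ 1 / n := by
  have h : ∀ k c c' : ℕ, c ≤ 1 → c' ≤ 1 →
      dist (((k + c : ℕ) : ℝ) / n) (((k + c' : ℕ) : ℝ) / n) ≤ 1 / n := by
    intro k c c' hc hc'
    rw [Real.dist_eq, ← sub_div, abs_div, Nat.abs_cast]
    gcongr
    push_cast
    rw [add_sub_add_left_eq_sub, abs_le]
    have : (c : ℝ) ≤ 1 := by exact_mod_cast hc
    have : (c' : ℝ) ≤ 1 := by exact_mod_cast hc'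
    constructor <;> linarith [c.cast_nonneg (α := ℝ), c'.cast_nonneg (α := ℝ)]
  exact max_le (h i a a' ha ha') (h j b b' hb hb')

theorem poincare_miranda_square_of_lt {F : ℝ × ℝ → ℝ × ℝ} (hF : ContinuousOn F unitSquare)
    (hleft : ∀ y ∈ Icc (0 : ℝ) 1, (F (0, y)).1 < 0) (hright : ∀ y ∈ Icc (0 : ℝ) 1, 0 < (F (1, y)).1)
    (hbot : ∀ x ∈ Icc (0 : ℝ) 1, (F (x, 0)).2 < 0) (htop : ∀ x ∈ Icc (0 : ℝ) 1, 0 < (F (x, 1)).2) :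
    ∃ z ∈ unitSquare, F z = 0 := by
  by_contra! hne
  obtain ⟨ε, hε, hεF⟩ := isCompact_unitSquare.exists_forall_le' hF.norm
    fun z hz => norm_pos_iff.2 (hne z hz)
  obtain ⟨δ, hδ, hFδ⟩ := Metric.uniformContinuousOn_iff.1
    (isCompact_unitSquare.uniformContinuousOn_of_continuous hF) ε hε
  obtain ⟨n, hn⟩ := exists_nat_one_div_lt hδ
  set N := n + 1
  have hcoord : ∀ k ≤ N, (k : ℝ) / N ∈ Icc (0 : ℝ) 1 := fun k hk =>
    (squareGrid_mem_unitSquare hk hk).1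
  obtain ⟨i, hi, j, hj, hfull⟩ := exists_fully_labelled_cell N
    (fun i j => mirandaLabel (F (squareGrid N i j)))
    (fun j hj => mirandaLabel_eq_zero_iff.2 (by simpa [squareGrid] using hleft _ (hcoord j hj)))
    (fun j hj => by
      rw [Ne, mirandaLabel_eq_zero_iff, not_lt]
      simpa [squareGrid, N, Nat.cast_add_one_ne_zero] using (hright _ (hcoord j hj)).le)
    (fun i hi => by
      rw [Ne, mirandaLabel_eq_two_iff, not_and_or, not_le, not_le]
      exact Or.inr (by simpa [squareGrid] using hbot _ (hcoord i hi)))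
    (fun i hi => by
      rw [Ne, mirandaLabel_eq_one_iff, not_and_or, not_le, not_lt]
      exact Or.inr (by simpa [squareGrid, N, Nat.cast_add_one_ne_zero] using (htop _ (hcoord i hi)).le))
  obtain ⟨a, ha, b, hb, hA⟩ := hfull 0
  obtain ⟨a', ha', b', hb', hB⟩ := hfull 1
  obtain ⟨a'', ha'', b'', hb'', hC⟩ := hfull 2
  rw [mirandaLabel_eq_zero_iff] at hA
  rw [mirandaLabel_eq_one_iff] at hB
  rw [mirandaLabel_eq_two_iff] at hC
  have hmem : ∀ {c d : ℕ}, c ≤ 1 → d ≤ 1 → squareGrid N (i + c) (j + d) ∈ unitSquare :=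
    fun hc hd => squareGrid_mem_unitSquare (by omega) (by omega)
  have hclose : ∀ {c d c' d' : ℕ}, c ≤ 1 → d ≤ 1 → c' ≤ 1 → d' ≤ 1 →
      dist (F (squareGrid N (i + c) (j + d))) (F (squareGrid N (i + c') (j + d'))) < ε :=
    fun hc hd hc' hd' => hFδ _ (hmem hc hd) _ (hmem hc' hd')
      ((dist_squareGrid_le hc hd hc' hd').trans_lt (by simpa [N] using hn))
  -- The corner labelled `1` is where both coordinates of `F` change sign within the cell.
  set v := F (squareGrid N (i + a') (j + b'))
  obtain ⟨hAB, -⟩ := max_lt_iff.1 (Prod.dist_eq.symm.trans_lt (hclose ha hb ha' hb'))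
  obtain ⟨-, hBC⟩ := max_lt_iff.1 (Prod.dist_eq.symm.trans_lt (hclose ha' hb' ha'' hb''))
  rw [Real.dist_eq, abs_sub_lt_iff] at hAB hBC
  have hv : ‖v‖ < ε := by
    rw [Prod.norm_def, max_lt_iff, Real.norm_eq_abs, Real.norm_eq_abs, abs_lt, abs_lt]
    refine ⟨⟨?_, ?_⟩, ?_, ?_⟩ <;> linarith
  exact hv.not_ge (hεF _ (hmem ha' hb'))

theorem poincare_miranda_square {F : ℝ × ℝ → ℝ × ℝ} (hF : ContinuousOn F unitSquare)
    (hleft : ∀ y ∈ Icc (0 : ℝ) 1, (F (0, y)).1 ≤ 0) (hright : ∀ y ∈ Icc (0 : ℝ) 1, 0 ≤ (F (1, y)).1)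
    (hbot : ∀ x ∈ Icc (0 : ℝ) 1, (F (x, 0)).2 ≤ 0) (htop : ∀ x ∈ Icc (0 : ℝ) 1, 0 ≤ (F (x, 1)).2) :
    ∃ z ∈ unitSquare, F z = 0 := by
  by_contra! hne
  obtain ⟨ε, hε, hεF⟩ := isCompact_unitSquare.exists_forall_le' hF.norm
    fun z hz => norm_pos_iff.2 (hne z hz)
  -- Pushing `F` outwards by less than `ε` makes the boundary signs strict without creating a zero.
  set c : ℝ × ℝ := (1 / 2, 1 / 2)
  obtain ⟨z, hz, hz0⟩ := poincare_miranda_square_of_lt (F := fun z => F z + (ε / 2) • (z - c))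
    (hF.add (by fun_prop))
    (fun y hy => by simp [c]; linarith [hleft y hy])
    (fun y hy => by simp [c]; linarith [hright y hy])
    (fun x hx => by simp [c]; linarith [hbot x hx])
    (fun x hx => by simp [c]; linarith [htop x hx])
  have hzc : ‖z - c‖ ≤ 1 / 2 := by
    obtain ⟨⟨hz1, hz1'⟩, hz2, hz2'⟩ := hz
    rw [Prod.norm_def, max_le_iff, Real.norm_eq_abs, Real.norm_eq_abs, abs_le, abs_le]
    simp only [Prod.fst_sub, Prod.snd_sub, c]
    refine ⟨⟨?_, ?_⟩, ?_, ?_⟩ <;> linarith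
  have hFz : ‖F z‖ ≤ ε / 4 := by
    rw [eq_neg_of_add_eq_zero_left hz0, norm_neg, norm_smul, Real.norm_of_nonneg (by positivity)]
    linarith [mul_le_mul_of_nonneg_left hzc (by positivity : (0 : ℝ) ≤ ε / 2)]
  linarith [hεF z hz]

lemma isClosed_komiyaSide : ∀ o, IsClosed (komiyaSide o)
  | none => isClosed_Icc
  | some false => isClosed_singleton
  | some true => isClosed_singleton

lemma convex_komiyaSide : ∀ o, Convex ℝ (komiyaSide o)
  | none => convex_Icc 0 1
  | some false => convex_singleton 0
  | some true => convex_singleton 1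

lemma komiyaSide_subset_Icc : ∀ o, komiyaSide o ⊆ Icc 0 1
  | none => subset_rfl
  | some false => singleton_subset_iff.2 ⟨le_rfl, zero_le_one⟩
  | some true => singleton_subset_iff.2 ⟨zero_le_one, le_rfl⟩

lemma isClosed_komiyaFace (m : Option Bool × Option Bool) : IsClosed (komiyaFace m) :=
  (isClosed_komiyaSide m.1).prod (isClosed_komiyaSide m.2)

lemma convex_komiyaFace (m : Option Bool × Option Bool) : Convex ℝ (komiyaFace m) :=
  (convex_komiyaSide m.1).prod (convex_komiyaSide m.2)

lemma komiyaFace_subset_unitSquare (m : Option Bool × Option Bool) :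
    komiyaFace m ⊆ unitSquare :=
  prod_mono (komiyaSide_subset_Icc m.1) (komiyaSide_subset_Icc m.2)

lemma exists_minimal_komiyaSide {t : ℝ} (ht : t ∈ Icc (0 : ℝ) 1) :
    ∃ o, t ∈ komiyaSide o ∧ ∀ o', t ∈ komiyaSide o' → komiyaSide o ⊆ komiyaSide o' := by
  by_cases h0 : t = 0
  · exact ⟨some false, h0, fun _ h => singleton_subset_iff.2 (h0 ▸ h)⟩
  by_cases h1 : t = 1
  · exact ⟨some true, h1, fun _ h => singleton_subset_iff.2 (h1 ▸ h)⟩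
  refine ⟨none, ht, ?_⟩
  rintro (_ | _ | _) h
  · exact subset_rfl
  · exact absurd h h0
  · exact absurd h h1

lemma exists_minimal_komiyaFace {x : ℝ × ℝ} (hx : x ∈ unitSquare) :
    ∃ m, x ∈ komiyaFace m ∧ ∀ m', x ∈ komiyaFace m' → komiyaFace m ⊆ komiyaFace m' := by
  obtain ⟨o₁, h₁, hmin₁⟩ := exists_minimal_komiyaSide hx.1
  obtain ⟨o₂, h₂, hmin₂⟩ := exists_minimal_komiyaSide hx.2
  exact ⟨(o₁, o₂), ⟨h₁, h₂⟩, fun m' hm' => prod_mono (hmin₁ _ hm'.1) (hmin₂ _ hm'.2)⟩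

def openStar (m : Option Bool × Option Bool) : Set (ℝ × ℝ) :=
  {x | ∀ m', x ∈ komiyaFace m' → komiyaFace m ⊆ komiyaFace m'}

lemma isOpen_openStar (m : Option Bool × Option Bool) : IsOpen (openStar m) := by
  have h : openStar m = ⋂ m' ∈ {m' | ¬komiyaFace m ⊆ komiyaFace m'}, (komiyaFace m')ᶜ := by
    ext x
    simp only [openStar, mem_ofPred_eq, mem_iInter, mem_compl_iff]
    exact forall_congr' fun _ => not_imp_not.symm
  rw [h]
  exact (toFinite _).isOpen_biInter fun m' _ => (isClosed_komiyaFace m').isOpen_compl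

lemma unitSquare_subset_iUnion_inter_openStar {B : Option Bool × Option Bool → Set (ℝ × ℝ)}
    (hcover : ∀ m', komiyaFace m' ⊆ ⋃ m ∈ {m | komiyaFace m ⊆ komiyaFace m'}, B m) :
    unitSquare ⊆ ⋃ m, B m ∩ openStar m := by
  intro x hx
  obtain ⟨m', hxm', hmin⟩ := exists_minimal_komiyaFace hx
  obtain ⟨m, hmm', hxB⟩ := mem_iUnion₂.1 (hcover m' hxm')
  exact mem_iUnion.2 ⟨m, hxB, fun m'' hx'' => hmm'.trans (hmin m'' hx'')⟩

theorem surjOn_of_mapsTo_komiyaFace {f : ℝ × ℝ → ℝ × ℝ} (hf : ContinuousOn f unitSquare)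
    (hface : ∀ m, MapsTo f (komiyaFace m) (komiyaFace m)) :
    SurjOn f unitSquare unitSquare := by
  rintro p ⟨⟨hp₁, hp₁'⟩, hp₂, hp₂'⟩
  have hleft y (hy : y ∈ Icc (0 : ℝ) 1) : (f (0, y)).1 = 0 :=
    (hface (some false, none) (x := (0, y)) ⟨rfl, hy⟩).1
  have hright y (hy : y ∈ Icc (0 : ℝ) 1) : (f (1, y)).1 = 1 :=
    (hface (some true, none) (x := (1, y)) ⟨rfl, hy⟩).1
  have hbot x (hx : x ∈ Icc (0 : ℝ) 1) : (f (x, 0)).2 = 0 :=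
    (hface (none, some false) (x := (x, 0)) ⟨hx, rfl⟩).2
  have htop x (hx : x ∈ Icc (0 : ℝ) 1) : (f (x, 1)).2 = 1 :=
    (hface (none, some true) (x := (x, 1)) ⟨hx, rfl⟩).2
  obtain ⟨z, hz, hz0⟩ := poincare_miranda_square (F := fun z => f z - p)
    (hf.sub continuousOn_const)
    (fun y hy => by simp [hleft y hy, hp₁]) (fun y hy => by simp [hright y hy, hp₁'])
    (fun x hx => by simp [hbot x hx, hp₂]) (fun x hx => by simp [htop x hx, hp₂'])
  exact ⟨z, hz, sub_eq_zero.1 hz0⟩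

/-- Komiya's polytopal KKMS theorem for the square Q = Δ₁ × Δ₁: given a point q(F) in
each face F and open (in Q) sets B_F with every face F' covered by the B_F over faces
F ⊆ F', there is a collection 𝓕 of faces with q(Q) ∈ conv{q(F) : F ∈ 𝓕} and
⋂_{F ∈ 𝓕} B_F ≠ ∅. -/
theorem stmt15 (q : Option Bool × Option Bool → ℝ × ℝ)
    (hq : ∀ m, q m ∈ komiyaFace m)
    (B : Option Bool × Option Bool → Set (ℝ × ℝ))
    (hBopen : ∀ m, ∃ U : Set (ℝ × ℝ), IsOpen U ∧ B m = U ∩ komiyaFace (none, none))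
    (hcover : ∀ m', komiyaFace m' ⊆ ⋃ m ∈ {m | komiyaFace m ⊆ komiyaFace m'}, B m) :
    ∃ 𝓕 : Finset (Option Bool × Option Bool),
      q (none, none) ∈ convexHull ℝ (q '' ↑𝓕) ∧ (⋂ m ∈ 𝓕, B m).Nonempty := by
  choose U hU hBU using hBopen
  obtain ⟨ρ, hρ⟩ := PartitionOfUnity.exists_isSubordinate (isClosed_komiyaFace (none, none))
    (fun m => U m ∩ openStar m) (fun m => (hU m).inter (isOpen_openStar m))
    ((unitSquare_subset_iUnion_inter_openStar hcover).trans
      (iUnion_mono fun m => inter_subset_inter_left _ ((hBU m).trans_subset inter_subset_left)))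
  have hactive {x} {m} (h : ρ m x ≠ 0) : x ∈ U m ∩ openStar m := hρ m (subset_tsupport _ h)
  have hface m' : MapsTo (fun x => ∑ᶠ m, ρ m x • q m) (komiyaFace m') (komiyaFace m') :=
    fun x hx => ρ.finsum_smul_mem_convex (g := fun m _ => q m) (komiyaFace_subset_unitSquare m' hx)
      (fun m hm => (hactive hm).2 m' hx (hq m)) (convex_komiyaFace m')
  obtain ⟨x, hx, hfx⟩ := surjOn_of_mapsTo_komiyaFace
    (ρ.continuous_finsum_smul fun _ _ _ => continuousAt_const).continuousOn hface (hq (none, none))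
  refine ⟨Finset.univ.filter (ρ · x ≠ 0), hfx ▸ ρ.finsum_smul_mem_convex (g := fun m _ => q m) hx (fun m hm => ?_)
    (convex_convexHull ℝ _), x, mem_iInter₂.2 fun m hm => ?_⟩
  · rw [hBU m]
    exact ⟨(hactive (Finset.mem_filter.1 hm).2).1, hx⟩
  · exact subset_convexHull ℝ _ (mem_image_of_mem q (by simpa using hm))
end

section
/- Let P be a finite set in ℝ^d and 𝓑 a finite family of axis-parallel boxes in ℝ^d. If for every subfamily 𝓑' ⊆ 𝓑 with |𝓑'| ≤ 2d the trace 𝓑'|_P is intersecting (there is a point of P in ⋂𝓑'), then 𝓑|_P is intersecting: there exists a point of P contained in every box of 𝓑. (Halman's discrete Helly theorem for boxes.) -/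
/-- Halman's discrete Helly theorem for boxes: if for every subfamily of at most 2d
boxes some point of P lies in all of them, then some point of P lies in all boxes. -/
theorem stmt18 {ι : Type*} (d : ℕ) (P : Set (Fin d → ℝ)) (hP : P.Finite)
    (s : Finset ι) (a b : ι → (Fin d → ℝ))
    (h : ∀ t ⊆ s, t.card ≤ 2 * d →
      ∃ q ∈ P, ∀ i ∈ t, q ∈ Set.Icc (a i) (b i)) :
    ∃ q ∈ P, ∀ i ∈ s, q ∈ Set.Icc (a i) (b i) := by
  classical
  rcases s.eq_empty_or_nonempty with rfl | hs
  · obtain ⟨q, hq, _⟩ := h ∅ (by simp) (by simp)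
    exact ⟨q, hq, by simp⟩
  · have hmax : ∀ k : Fin d, ∃ i ∈ s, ∀ j ∈ s, a j k ≤ a i k :=
      fun k => s.exists_max_image (fun i => a i k) hs
    have hmin : ∀ k : Fin d, ∃ i ∈ s, ∀ j ∈ s, b i k ≤ b j k :=
      fun k => s.exists_min_image (fun i => b i k) hs
    choose im him hima using hmax
    choose jm hjm hjmb using hmin
    set t : Finset ι := (Finset.univ.image im) ∪ (Finset.univ.image jm) with ht
    have hts : t ⊆ s := by
      intro x hx
      simp only [ht, Finset.mem_union, Finset.mem_image, Finset.mem_univ, true_and] at hx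
      rcases hx with ⟨k, rfl⟩ | ⟨k, rfl⟩
      exacts [him k, hjm k]
    have hcard : t.card ≤ 2 * d := by
      calc t.card ≤ (Finset.univ.image im).card + (Finset.univ.image jm).card :=
            Finset.card_union_le _ _
        _ ≤ d + d := by
            have h1 := (Finset.card_image_le (s := (Finset.univ : Finset (Fin d))) (f := im))
            have h2 := (Finset.card_image_le (s := (Finset.univ : Finset (Fin d))) (f := jm))
            simp only [Finset.card_univ, Fintype.card_fin] at h1 h2
            omega
        _ = 2 * d := by ring
    obtain ⟨q, hq, hqt⟩ := h t hts hcard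
    refine ⟨q, hq, fun i hi => ⟨fun k => ?_, fun k => ?_⟩⟩
    · have h1 := (hqt (im k) (by simp [ht])).1 k
      exact le_trans (hima k i hi) h1
    · have h2 := (hqt (jm k) (by simp [ht])).2 k
      exact le_trans h2 (hjmb k i hi)
end
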